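/- arXiv:2402.09072 — 2 statements merged into one kernel-verified Lean document; each statement's English description precedes it below -/
import Mathlib

section
/- For third-order tensors A, B with compatible sizes, the frontal slices in the Fourier domain of the t-product satisfy: the i-th frontal slice of the DFT (along the tube dimension) of A ⋆ B equals the matrix product of the i-th Fourier frontal slice of A with the i-th Fourier frontal slice of B, for each i = 1, ..., n₃. -/
open Matrix Complex Finset Kronecker

abbrev Tensor (n₁ n₂ n₃ : ℕ) := Fin n₃ → Matrix (Fin n₁) (Fin n₂) ℝ

/-- The DFT along the third (tube) mode: the `i`-th Fourier frontal slice `Â⁽ⁱ⁾`. -/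
noncomputable def dftSlice {n₁ n₂ n₃ : ℕ} (A : Tensor n₁ n₂ n₃) (i : Fin n₃) :
    Matrix (Fin n₁) (Fin n₂) ℂ :=
  ∑ k : Fin n₃,
    Complex.exp (-2 * Real.pi * Complex.I * ((i : ℕ) : ℂ) * ((k : ℕ) : ℂ) / (n₃ : ℂ)) •
      (A k).map Complex.ofReal

/-- The t-product `A ⋆ B = fold (bcirc A · unfold B)`, i.e. circular convolution of
frontal slices. -/
noncomputable def tProd {n₁ q n₂ n₃ : ℕ} (A : Tensor n₁ q n₃) (B : Tensor q n₂ n₃) :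
    Tensor n₁ n₂ n₃ :=
  fun k => ∑ m : Fin n₃, A m * B (k - m)

/-- Tensor transpose: transpose each frontal slice and reverse the order of slices 2..n₃. -/
def tTranspose {n₁ n₂ n₃ : ℕ} (A : Tensor n₁ n₂ n₃) : Tensor n₂ n₁ n₃ :=
  fun k => (A (-k)).transpose

/-- Identity tensor: first frontal slice is the identity matrix, the rest are zero. -/
def tId (n n₃ : ℕ) [NeZero n₃] : Tensor n n n₃ := fun k => if k = 0 then 1 else 0

/-- Tensor trace `(1/n₃) Σᵢ trace Â⁽ⁱ⁾` (complex-valued form). -/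
noncomputable def tTraceC {n n₃ : ℕ} (A : Tensor n n n₃) : ℂ :=
  (n₃ : ℂ)⁻¹ * ∑ i : Fin n₃, (dftSlice A i).trace

/-- Tensor trace (real value). -/
noncomputable def tTraceR {n n₃ : ℕ} (A : Tensor n n n₃) : ℝ := (tTraceC A).re

/-- Squared Frobenius norm of a third-order tensor. -/
def frobSq {n₁ n₂ n₃ : ℕ} (A : Tensor n₁ n₂ n₃) : ℝ :=
  ∑ k : Fin n₃, ∑ p, ∑ q, (A k p q) ^ 2


lemma exp_mod_eq {n₃ : ℕ} (hn : n₃ ≠ 0) (i : Fin n₃) (a : ℕ) :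
    Complex.exp (-2 * Real.pi * Complex.I * ((i : ℕ) : ℂ) * ((a % n₃ : ℕ) : ℂ) / (n₃ : ℂ)) =
      Complex.exp (-2 * Real.pi * Complex.I * ((i : ℕ) : ℂ) * ((a : ℕ) : ℂ) / (n₃ : ℂ)) := by
  have hnc : (n₃ : ℂ) ≠ 0 := Nat.cast_ne_zero.mpr hn
  conv_rhs => rw [← Nat.div_add_mod a n₃]
  generalize a / n₃ = s
  push_cast
  have h : -2 * Real.pi * Complex.I * ((i : ℕ) : ℂ) *
      ((n₃ : ℂ) * (s : ℂ) + ((a % n₃ : ℕ) : ℂ)) / (n₃ : ℂ) =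
      (-((i : ℕ) * s : ℕ) : ℤ) * (2 * Real.pi * Complex.I) +
      -2 * Real.pi * Complex.I * ((i : ℕ) : ℂ) * ((a % n₃ : ℕ) : ℂ) / (n₃ : ℂ) := by
    push_cast
    field_simp
    ring
  rw [h, Complex.exp_add, Complex.exp_int_mul_two_pi_mul_I, one_mul]

lemma exp_add_fin {n₃ : ℕ} (i m j : Fin n₃) :
    Complex.exp (-2 * Real.pi * Complex.I * ((i : ℕ) : ℂ) * (((m + j : Fin n₃) : ℕ) : ℂ) / (n₃ : ℂ)) =
      Complex.exp (-2 * Real.pi * Complex.I * ((i : ℕ) : ℂ) * ((m : ℕ) : ℂ) / (n₃ : ℂ)) *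
      Complex.exp (-2 * Real.pi * Complex.I * ((i : ℕ) : ℂ) * ((j : ℕ) : ℂ) / (n₃ : ℂ)) := by
  have hn : n₃ ≠ 0 := Fin.pos i |>.ne'
  have hnc : (n₃ : ℂ) ≠ 0 := Nat.cast_ne_zero.mpr hn
  have hval : ((m + j : Fin n₃) : ℕ) = ((m : ℕ) + (j : ℕ)) % n₃ := Fin.add_def m j ▸ rfl
  rw [hval, exp_mod_eq hn i, ← Complex.exp_add]
  congr 1
  push_cast
  field_simp
  ring

/-- In the Fourier domain, the frontal slices of a t-product are the matrix products
of the corresponding Fourier frontal slices. -/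
theorem dftSlice_tProd {n₁ q n₂ n₃ : ℕ} (A : Tensor n₁ q n₃) (B : Tensor q n₂ n₃) :
    ∀ i : Fin n₃, dftSlice (tProd A B) i = dftSlice A i * dftSlice B i := by
  intro i
  haveI : NeZero n₃ := ⟨(Fin.pos i).ne'⟩
  unfold dftSlice tProd
  calc
    ∑ k : Fin n₃,
        Complex.exp (-2 * Real.pi * Complex.I * ((i : ℕ) : ℂ) * ((k : ℕ) : ℂ) / (n₃ : ℂ)) •
          (∑ m : Fin n₃, A m * B (k - m)).map Complex.ofReal
      = ∑ m : Fin n₃, ∑ k : Fin n₃,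
          Complex.exp (-2 * Real.pi * Complex.I * ((i : ℕ) : ℂ) * ((k : ℕ) : ℂ) / (n₃ : ℂ)) •
            ((A m).map Complex.ofReal * (B (k - m)).map Complex.ofReal) := by
        rw [Finset.sum_comm]
        refine Finset.sum_congr rfl fun k _ => ?_
        rw [show (∑ m : Fin n₃, A m * B (k - m)).map Complex.ofReal
            = ∑ m : Fin n₃, (A m).map Complex.ofReal * (B (k - m)).map Complex.ofReal from ?_,
          Finset.smul_sum]
        · rw [show (∑ m : Fin n₃, A m * B (k - m)).map Complex.ofReal
              = ∑ m : Fin n₃, (A m * B (k - m)).map Complex.ofReal from by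
            ext p r; simp [Matrix.map_apply, Matrix.sum_apply]]
          exact Finset.sum_congr rfl fun m _ =>
            Matrix.map_mul (f := Complex.ofRealHom)
    _ = ∑ m : Fin n₃, ∑ j : Fin n₃,
          Complex.exp (-2 * Real.pi * Complex.I * ((i : ℕ) : ℂ) * (((m + j : Fin n₃) : ℕ) : ℂ) / (n₃ : ℂ)) •
            ((A m).map Complex.ofReal * (B j).map Complex.ofReal) := by
        refine Finset.sum_congr rfl fun m _ => ?_
        refine Fintype.sum_equiv (Equiv.subRight m) _ _ fun k => ?_
        have hk : m + (k - m) = k := by abel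
        simp only [Equiv.subRight_apply, hk]
    _ = ∑ m : Fin n₃, ∑ j : Fin n₃,
          (Complex.exp (-2 * Real.pi * Complex.I * ((i : ℕ) : ℂ) * ((m : ℕ) : ℂ) / (n₃ : ℂ)) •
            (A m).map Complex.ofReal) *
          (Complex.exp (-2 * Real.pi * Complex.I * ((i : ℕ) : ℂ) * ((j : ℕ) : ℂ) / (n₃ : ℂ)) •
            (B j).map Complex.ofReal) := by
        refine Finset.sum_congr rfl fun m _ => Finset.sum_congr rfl fun j _ => ?_
        rw [exp_add_fin i m j, Matrix.smul_mul, Matrix.mul_smul, smul_smul]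
    _ = (∑ k : Fin n₃,
          Complex.exp (-2 * Real.pi * Complex.I * ((i : ℕ) : ℂ) * ((k : ℕ) : ℂ) / (n₃ : ℂ)) •
            (A k).map Complex.ofReal) *
        (∑ k : Fin n₃,
          Complex.exp (-2 * Real.pi * Complex.I * ((i : ℕ) : ℂ) * ((k : ℕ) : ℂ) / (n₃ : ℂ)) •
            (B k).map Complex.ofReal) := by
        rw [Matrix.sum_mul]
        exact Finset.sum_congr rfl fun m _ => (Matrix.mul_sum _ _ _).symm
end

section
/- For A ∈ ℝ^{n₁×n₂×n₃}, the squared Frobenius norm satisfies ‖A‖_F² = Trace(A ⋆ Aᵀ), where Trace is the tensor trace Trace(X) = (1/n₃) Σᵢ trace(X̂^{(i)}). -/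
open Matrix Complex Finset Kronecker

/-!
The tensor trace only sees the zeroth frontal slice: averaging the DFT over all frequencies
kills every other slice by orthogonality of the `n₃`-th roots of unity, so `Trace X = trace X⁽⁰⁾`.
The zeroth slice of `A ⋆ Aᵀ` is `∑ₘ A⁽ᵐ⁾ A⁽ᵐ⁾ᵀ`, whose trace is `‖A‖_F²`.
-/

theorem IsPrimitiveRoot.sum_range_pow_pow {R : Type*} [CommRing R] [IsDomain R] {ζ : R} {n : ℕ}
    (hζ : IsPrimitiveRoot ζ n) (k : ℕ) :
    ∑ i ∈ range n, (ζ ^ k) ^ i = if n ∣ k then (n : R) else 0 := by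
  split_ifs with hk
  · obtain ⟨m, rfl⟩ := hk
    simp [pow_mul, hζ.pow_eq_one]
  · have hne : ζ ^ k ≠ 1 := mt (hζ.pow_eq_one_iff_dvd k).mp hk
    have hpow : (ζ ^ k) ^ n = 1 := by rw [← pow_mul, mul_comm, pow_mul, hζ.pow_eq_one, one_pow]
    refine eq_zero_of_ne_zero_of_mul_left_eq_zero (sub_ne_zero_of_ne hne.symm) ?_
    rw [mul_neg_geom_sum, hpow, sub_self]

open Real in
theorem sum_exp_dft_eq_ite {n : ℕ} [NeZero n] (k : Fin n) :
    ∑ i : Fin n, exp (-2 * π * I * ((i : ℕ) : ℂ) * ((k : ℕ) : ℂ) / (n : ℂ))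
      = if k = 0 then (n : ℂ) else 0 := by
  have hζ : IsPrimitiveRoot (exp (-2 * π * I / n)) n := by
    simpa [← Complex.exp_neg, neg_div] using (isPrimitiveRoot_exp n (NeZero.ne n)).inv
  have hpow (i : ℕ) : exp (-2 * π * I * i * k / n) = (exp (-2 * π * I / n) ^ (k : ℕ)) ^ i := by
    rw [← Complex.exp_nat_mul, ← Complex.exp_nat_mul]
    ring_nf
  have hdvd : n ∣ (k : ℕ) ↔ k = 0 :=
    ⟨fun h => Fin.ext (Nat.eq_zero_of_dvd_of_lt h k.isLt), fun h => h ▸ dvd_zero n⟩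
  rw [Fintype.sum_congr _ _ fun i : Fin n => hpow i,
    Fin.sum_univ_eq_sum_range (fun i => (exp (-2 * π * I / n) ^ (k : ℕ)) ^ i),
    hζ.sum_range_pow_pow]
  simp only [hdvd]

theorem trace_dftSlice {n n₃ : ℕ} (A : Tensor n n n₃) (i : Fin n₃) :
    (dftSlice A i).trace = ∑ k : Fin n₃,
      exp (-2 * Real.pi * I * ((i : ℕ) : ℂ) * ((k : ℕ) : ℂ) / (n₃ : ℂ)) * ((A k).trace : ℂ) := by
  simp only [dftSlice, trace_sum, trace_smul, smul_eq_mul]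
  exact sum_congr rfl fun k _ => congrArg _ (AddMonoidHom.map_trace ofRealHom (A k)).symm

theorem tTraceC_eq_trace_zero {n n₃ : ℕ} [NeZero n₃] (A : Tensor n n n₃) :
    tTraceC A = ((A 0).trace : ℂ) := by
  simp_rw [tTraceC, trace_dftSlice]
  rw [sum_comm]
  simp_rw [← sum_mul, sum_exp_dft_eq_ite, ite_mul, zero_mul, sum_ite_eq', mem_univ, if_true]
  exact inv_mul_cancel_left₀ (Nat.cast_ne_zero.mpr (NeZero.ne n₃)) _

theorem trace_tProd_tTranspose_apply_zero {n₁ n₂ n₃ : ℕ} [NeZero n₃] (A : Tensor n₁ n₂ n₃) :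
    (tProd A (tTranspose A) 0).trace = frobSq A := by
  simp only [tProd, tTranspose, zero_sub, neg_neg, trace_sum, frobSq, ← sum_hadamard_eq,
    hadamard_apply, sq]

/-- `‖A‖_F² = Trace (A ⋆ Aᵀ)`. -/
theorem frobSq_eq_tTrace_tProd_transpose {n₁ n₂ n₃ : ℕ} (A : Tensor n₁ n₂ n₃) :
    ((frobSq A : ℝ) : ℂ) = tTraceC (tProd A (tTranspose A)) := by
  rcases eq_zero_or_neZero n₃ with rfl | _
  · simp [frobSq, tTraceC]
  rw [tTraceC_eq_trace_zero, trace_tProd_tTranspose_apply_zero]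
end
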